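/- arXiv:2604.06050 — 6 statements merged into one kernel-verified Lean document; each statement's English description precedes it below -/
import Mathlib

section
/- Fix y > 0 and p ∈ (1/2, 1). Define E_min(γ) = y·p^{1/γ} and E_max(γ) = (y/2)·(2p)^{1/γ} for γ ∈ (0,1). Then E_min(γ) → 0 and E_max(γ) → ∞ as γ → 0⁺, and both E_min(γ) and E_max(γ) converge to p·y as γ → 1⁻. Consequently, ⋃_{γ∈(0,1)} (E_min(γ), E_max(γ)) × (E_min(γ), E_max(γ)) = (0,∞)². -/
open Real Filter

theorem stmt1 (y p : ℝ) (hy : 0 < y) (hp : p ∈ Set.Ioo (1/2 : ℝ) 1)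
    (Emin Emax : ℝ → ℝ)
    (hEmin : ∀ γ, Emin γ = y * p ^ (1/γ))
    (hEmax : ∀ γ, Emax γ = (y/2) * (2*p) ^ (1/γ)) :
    Tendsto Emin (nhdsWithin 0 (Set.Ioi 0)) (nhds 0) ∧
    Tendsto Emax (nhdsWithin 0 (Set.Ioi 0)) atTop ∧
    Tendsto Emin (nhdsWithin 1 (Set.Iio 1)) (nhds (p*y)) ∧
    Tendsto Emax (nhdsWithin 1 (Set.Iio 1)) (nhds (p*y)) ∧
    (⋃ γ ∈ Set.Ioo (0:ℝ) 1, Set.Ioo (Emin γ) (Emax γ) ×ˢ Set.Ioo (Emin γ) (Emax γ))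
      = Set.Ioi 0 ×ˢ Set.Ioi 0 := by
  obtain ⟨hp1, hp2⟩ := hp
  have hp0 : 0 < p := lt_trans (by norm_num) hp1
  have h2p : 1 < 2 * p := by linarith
  have h2p0 : 0 < 2 * p := by linarith
  have htop : Tendsto (fun γ : ℝ => 1/γ) (nhdsWithin 0 (Set.Ioi 0)) atTop := by
    simpa [one_div] using tendsto_inv_nhdsGT_zero (𝕜 := ℝ)
  -- Emin → 0 at 0⁺
  have h1 : Tendsto Emin (nhdsWithin 0 (Set.Ioi 0)) (nhds 0) := by
    have := ((tendsto_rpow_atTop_of_base_lt_one p (by linarith) hp2).comp htop).const_mul y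
    rw [mul_zero] at this
    refine this.congr fun γ => ?_
    simp [hEmin γ, Function.comp]
  -- Emax → ∞ at 0⁺
  have h2 : Tendsto Emax (nhdsWithin 0 (Set.Ioi 0)) atTop := by
    have hlog : 0 < Real.log (2 * p) := Real.log_pos h2p
    have hexp : Tendsto (fun γ : ℝ => (2*p) ^ (1/γ)) (nhdsWithin 0 (Set.Ioi 0)) atTop := by
      have := Real.tendsto_exp_atTop.comp (htop.const_mul_atTop hlog)
      refine this.congr fun γ => ?_
      simp only [Function.comp, Real.rpow_def_of_pos h2p0, one_div]
    have := hexp.const_mul_atTop (show (0:ℝ) < y/2 by linarith)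
    refine this.congr fun γ => (hEmax γ).symm
  -- Emin → p*y at 1⁻
  have h3 : Tendsto Emin (nhdsWithin 1 (Set.Iio 1)) (nhds (p*y)) := by
    have hc : ContinuousAt (fun γ : ℝ => y * p ^ (1/γ)) 1 := by
      refine continuousAt_const.mul ?_
      exact (Real.continuousAt_const_rpow hp0.ne').comp
        ((continuousAt_const.div continuousAt_id one_ne_zero))
    have := (hc.continuousWithinAt (s := Set.Iio 1)).tendsto
    rw [show (1:ℝ)/1 = 1 by norm_num, Real.rpow_one] at this
    rw [mul_comm p y]
    refine this.congr fun γ => (hEmin γ).symm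
  -- Emax → p*y at 1⁻
  have h4 : Tendsto Emax (nhdsWithin 1 (Set.Iio 1)) (nhds (p*y)) := by
    have hc : ContinuousAt (fun γ : ℝ => (y/2) * (2*p) ^ (1/γ)) 1 := by
      refine continuousAt_const.mul ?_
      exact (Real.continuousAt_const_rpow h2p0.ne').comp
        ((continuousAt_const.div continuousAt_id one_ne_zero))
    have := (hc.continuousWithinAt (s := Set.Iio 1)).tendsto
    rw [show (1:ℝ)/1 = 1 by norm_num, Real.rpow_one] at this
    have hval : y / 2 * (2 * p) = p * y := by ring
    rw [hval] at this
    refine this.congr fun γ => (hEmax γ).symm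
  refine ⟨h1, h2, h3, h4, ?_⟩
  ext ⟨a, b⟩
  simp only [Set.mem_iUnion, Set.mem_prod, Set.mem_Ioo, Set.mem_Ioi, exists_prop]
  constructor
  · rintro ⟨γ, ⟨hγ0, hγ1⟩, ⟨ha1, _⟩, ⟨hb1, _⟩⟩
    have hEminpos : 0 < Emin γ := by
      rw [hEmin γ]; positivity
    exact ⟨lt_trans hEminpos ha1, lt_trans hEminpos hb1⟩
  · rintro ⟨ha, hb⟩
    set m := min a b with hm
    set M := max a b with hM
    have hm0 : 0 < m := lt_min ha hb
    have e1 : ∀ᶠ γ in nhdsWithin 0 (Set.Ioi 0), Emin γ < m :=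
      h1.eventually (eventually_lt_nhds hm0)
    have e2 : ∀ᶠ γ in nhdsWithin 0 (Set.Ioi 0), M < Emax γ :=
      h2.eventually (eventually_gt_atTop M)
    have e3 : ∀ᶠ γ in nhdsWithin 0 (Set.Ioi 0), γ ∈ Set.Ioi (0:ℝ) :=
      eventually_mem_nhdsWithin
    have e4 : ∀ᶠ γ in nhdsWithin (0:ℝ) (Set.Ioi 0), γ < 1 :=
      eventually_nhdsWithin_of_eventually_nhds
        (eventually_lt_nhds (show (0:ℝ) < 1 by norm_num) : ∀ᶠ γ in nhds (0:ℝ), γ < 1)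
    obtain ⟨γ, hγ1, hγ2, hγ3, hγ4⟩ := (e1.and (e2.and (e3.and e4))).exists
    refine ⟨γ, ⟨hγ3, hγ4⟩, ⟨lt_of_lt_of_le hγ1 (min_le_left a b),
      lt_of_le_of_lt (le_max_left a b) hγ2⟩,
      ⟨lt_of_lt_of_le hγ1 (min_le_right a b),
      lt_of_le_of_lt (le_max_right a b) hγ2⟩⟩
end

section
/- Let 0 < d < c. Let Y be uniform on [-d, d] and Z uniform on [-c, c], independent. Define X = Z if Z < -d, and X = a + bY if Z ≥ -d, where a = (c-d)/2 and b = (c+d)/(2d). Then P(X > Y) = (c+d)/(2c). In particular, for every q ∈ (1/2, 1] there exists d ∈ (0, c] such that P(X > Y) = q. -/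
open MeasureTheory ProbabilityTheory

/-- The uniform distribution on the interval `[a, b]`. -/
noncomputable def unif (a b : ℝ) : Measure ℝ :=
  (ENNReal.ofReal (b - a))⁻¹ • volume.restrict (Set.Icc a b)

lemma unif_apply (a b : ℝ) (s : Set ℝ) :
    unif a b s = (ENNReal.ofReal (b - a))⁻¹ * volume (s ∩ Set.Icc a b) := by
  rw [unif, Measure.smul_apply, Measure.restrict_apply' measurableSet_Icc, smul_eq_mul]

theorem stmt3 {Ω : Type*} [MeasurableSpace Ω] (P : Measure Ω) [IsProbabilityMeasure P]
    (c d : ℝ) (hd : 0 < d) (hdc : d < c)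
    (Y Z : Ω → ℝ)
    (hY : Measure.map Y P = unif (-d) d)
    (hZ : Measure.map Z P = unif (-c) c)
    (hInd : IndepFun Y Z P)
    (X : Ω → ℝ)
    (hX : ∀ ω, X ω = if Z ω < -d then Z ω else (c - d)/2 + ((c + d)/(2*d)) * Y ω) :
    P {ω | Y ω < X ω} = ENNReal.ofReal ((c + d)/(2*c)) ∧
    ∀ q ∈ Set.Ioc (1/2 : ℝ) 1, ∃ d' ∈ Set.Ioc (0:ℝ) c, (c + d')/(2*c) = q := by
  have hc : 0 < c := hd.trans hdc
  have huniv : ∀ (a b : ℝ), a < b → unif a b Set.univ = 1 := by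
    intro a b hab
    rw [unif_apply, Set.univ_inter, Real.volume_Icc]
    exact ENNReal.inv_mul_cancel (by simp [sub_pos.2 hab, sub_nonneg.2 hab.le]
      <;> linarith) ENNReal.ofReal_ne_top
  have hYm : AEMeasurable Y P := by
    by_contra h
    have h2 := congrArg (fun μ : Measure ℝ => μ Set.univ) hY
    rw [Measure.map_of_not_aemeasurable h] at h2
    rw [huniv _ _ (by linarith : (-d:ℝ) < d)] at h2
    simp at h2
  have hZm : AEMeasurable Z P := by
    by_contra h
    have h2 := congrArg (fun μ : Measure ℝ => μ Set.univ) hZ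
    rw [Measure.map_of_not_aemeasurable h] at h2
    rw [huniv _ _ (by linarith : (-c:ℝ) < c)] at h2
    simp at h2
  have hnull : P {ω | Y ω ≤ -d} = 0 := by
    have h1 : {ω | Y ω ≤ -d} = Y ⁻¹' Set.Iic (-d) := rfl
    rw [h1, ← Measure.map_apply_of_aemeasurable hYm measurableSet_Iic, hY, unif_apply]
    have h2 : Set.Iic (-d) ∩ Set.Icc (-d) d = {(-d : ℝ)} := by
      ext x
      simp only [Set.mem_inter_iff, Set.mem_Iic, Set.mem_Icc, Set.mem_singleton_iff]
      constructor
      · rintro ⟨ha, hb, _⟩; linarith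
      · rintro rfl; exact ⟨le_refl _, le_refl _, by linarith⟩
    rw [h2]
    simp
  have hA : P (Z ⁻¹' Set.Ici (-d)) = ENNReal.ofReal ((c + d)/(2*c)) := by
    rw [← Measure.map_apply_of_aemeasurable hZm measurableSet_Ici, hZ, unif_apply]
    have h2 : Set.Ici (-d) ∩ Set.Icc (-c) c = Set.Icc (-d) c := by
      ext x
      simp only [Set.mem_inter_iff, Set.mem_Ici, Set.mem_Icc]
      constructor
      · rintro ⟨ha, _, hb⟩; exact ⟨ha, hb⟩
      · rintro ⟨ha, hb⟩; exact ⟨ha, by linarith, hb⟩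
    rw [h2, Real.volume_Icc]
    have h3 : c - -c = 2*c := by ring
    have h4 : c - -d = c + d := by ring
    rw [h3, h4, mul_comm, ← div_eq_mul_inv,
      ← ENNReal.ofReal_div_of_pos (by linarith)]
  have hae : ∀ᵐ ω ∂P, -d < Y ω := by
    rw [ae_iff]
    simpa only [not_lt] using hnull
  have hEq : {ω | Y ω < X ω} =ᵐ[P] Z ⁻¹' Set.Ici (-d) := by
    rw [Filter.eventuallyEq_set]
    filter_upwards [hae] with ω hω
    simp only [Set.mem_setOf_eq, Set.mem_preimage, Set.mem_Ici, hX ω]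
    by_cases h : Z ω < -d
    · rw [if_pos h]
      constructor
      · intro h2; linarith
      · intro h2; linarith
    · rw [if_neg h]
      push_neg at h
      constructor
      · intro _; exact h
      · intro _
        rw [← sub_pos]
        have h5 : (c - d)/2 + (c + d)/(2*d) * Y ω - Y ω = (c - d) * (Y ω + d) / (2*d) := by
          field_simp
          ring
        rw [h5]
        exact div_pos (mul_pos (by linarith) (by linarith)) (by linarith)
  refine ⟨by rw [measure_congr hEq, hA], ?_⟩
  rintro q ⟨hq1, hq2⟩
  refine ⟨2*c*q - c, ⟨by nlinarith, by nlinarith⟩, by field_simp; ring⟩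
end

section
/- Let ε be a real random variable symmetric around zero, and let r ∈ (0,1). Define Z conditionally on ε = x to equal (1/r - 1)·x with probability (1+r)/2 and -(1/r + 1)·x with probability (1-r)/2. Then E[Z | ε = x] = 0 for all x, and ε + Z has the same distribution as (1/r)·ε. Consequently, (1/r)·ε is a mean-preserving spread of ε. -/
open MeasureTheory ProbabilityTheory

theorem stmt10 {Ω : Type*} [MeasurableSpace Ω] (P : Measure Ω) [IsProbabilityMeasure P]
    (r : ℝ) (hr : r ∈ Set.Ioo (0:ℝ) 1)
    (ε : Ω → ℝ) (hεm : Measurable ε)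
    (hsym : Measure.map (fun ω => -ε ω) P = Measure.map ε P)
    (ξ : Ω → Bool) (hξm : Measurable ξ)
    (hξ : P {ω | ξ ω = true} = ENNReal.ofReal ((1 + r)/2))
    (hind : IndepFun ε ξ P)
    (Z : Ω → ℝ)
    (hZ : ∀ ω, Z ω = if ξ ω then (1/r - 1) * ε ω else -(1/r + 1) * ε ω) :
    (P[Z | MeasurableSpace.comap ε inferInstance] =ᵐ[P] 0) ∧
    Measure.map (fun ω => ε ω + Z ω) P = Measure.map (fun ω => ε ω / r) P := by
  obtain ⟨hr0, hr1⟩ := hr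
  have hrne : r ≠ 0 := ne_of_gt hr0
  constructor
  · -- conditional expectation part
    by_cases hεint : Integrable ε P
    · -- rewrite Z = ε * g
      set c : Bool → ℝ := fun t => if t then (1/r - 1) else -(1/r + 1) with hc
      set g : Ω → ℝ := fun ω => c (ξ ω) with hg
      have hZeq : Z = ε * g := by
        funext ω
        rw [hZ ω]
        cases h : ξ ω <;> simp [hg, hc, h, mul_comm]
      have hgmeas : Measurable g := (measurable_from_top (f := c)).comp hξm
      have h1 : (0:ℝ) < 1/r := by positivity
      have h2 : (1:ℝ) < 1/r := by rw [lt_div_iff₀ hr0]; linarith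
      have hgbd : ∀ ω, ‖g ω‖ ≤ 1/r + 1 := by
        intro ω
        cases h : ξ ω
        · have hgv : g ω = -(1/r + 1) := by simp [hg, hc, h]
          rw [hgv, Real.norm_eq_abs, abs_neg, abs_of_pos (by linarith)]
        · have hgv : g ω = 1/r - 1 := by simp [hg, hc, h]
          rw [hgv, Real.norm_eq_abs, abs_of_pos (by linarith)]
          linarith
      have hgint : Integrable g P := by
        refine (integrable_const (1/r + 1)).mono' hgmeas.aestronglyMeasurable ?_
        exact Filter.Eventually.of_forall hgbd
      have hZint : Integrable (ε * g) P := by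
        refine (hεint.norm.const_mul (1/r + 1)).mono'
          (hεm.aestronglyMeasurable.mul hgmeas.aestronglyMeasurable) ?_
        refine Filter.Eventually.of_forall fun ω => ?_
        have := hgbd ω
        have h0 : (0:ℝ) ≤ ‖ε ω‖ := norm_nonneg _
        calc ‖(ε * g) ω‖ = ‖ε ω‖ * ‖g ω‖ := by simp [norm_mul]
          _ ≤ ‖ε ω‖ * (1/r + 1) := by nlinarith
          _ = (1/r + 1) * ‖ε ω‖ := by ring
      have hεm' : Measurable[MeasurableSpace.comap ε inferInstance] ε :=
        fun s hs => ⟨s, hs, rfl⟩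
      have hξm' : Measurable[MeasurableSpace.comap ξ inferInstance] ξ :=
        fun s hs => ⟨s, hs, rfl⟩
      have hgm1 : StronglyMeasurable[MeasurableSpace.comap ξ inferInstance] g :=
        ((measurable_from_top (f := c)).comp hξm').stronglyMeasurable
      have hle₂ : MeasurableSpace.comap ε inferInstance ≤ _ := hεm.comap_le
      have hle₁ : MeasurableSpace.comap ξ inferInstance ≤ _ := hξm.comap_le
      have hindep : Indep (MeasurableSpace.comap ξ inferInstance)
          (MeasurableSpace.comap ε inferInstance) P := hind.symm
      have hcond_g := condExp_indep_eq hle₁ hle₂ hgm1 hindep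
      -- integral of g is zero
      have hA : MeasurableSet (ξ ⁻¹' {true}) := hξm (measurableSet_singleton true)
      have hB : MeasurableSet (ξ ⁻¹' {false}) := hξm (measurableSet_singleton false)
      have hABc : ξ ⁻¹' {false} = (ξ ⁻¹' {true})ᶜ := by ext ω; cases h : ξ ω <;> simp [h]
      have hgdecomp : g = fun ω => Set.indicator (ξ ⁻¹' {true}) (fun _ => 1/r - 1) ω
          + Set.indicator (ξ ⁻¹' {false}) (fun _ => -(1/r + 1)) ω := by
        funext ω; cases h : ξ ω <;> simp [hg, hc, h]
      have hPA : P (ξ ⁻¹' {true}) = ENNReal.ofReal ((1 + r)/2) := hξ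
      have hPB : P (ξ ⁻¹' {false}) = ENNReal.ofReal ((1 - r)/2) := by
        rw [hABc, measure_compl hA (measure_ne_top _ _), hPA, measure_univ,
          ← ENNReal.ofReal_one, ← ENNReal.ofReal_sub _ (by linarith : (0:ℝ) ≤ (1+r)/2)]
        norm_num
        ring_nf
      have hint_g : ∫ ω, g ω ∂P = 0 := by
        rw [hgdecomp]
        rw [integral_add ((integrable_const _).indicator hA) ((integrable_const _).indicator hB)]
        rw [integral_indicator_const _ hA, integral_indicator_const _ hB, measureReal_def, measureReal_def, hPA, hPB,
          ENNReal.toReal_ofReal (by linarith), ENNReal.toReal_ofReal (by linarith)]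
        field_simp
        ring
      have key := condExp_mul_of_stronglyMeasurable_left hεm'.stronglyMeasurable hZint hgint
      rw [hZeq]
      refine key.trans ?_
      have : ∫ ω, g ω ∂P = ∫ ω, g ω ∂P := rfl
      filter_upwards [hcond_g] with ω hω
      simp [hω, hint_g]
    · -- Z is not integrable either
      have hZnint : ¬ Integrable Z P := by
        intro hZint
        apply hεint
        have h1r : (0:ℝ) < 1 - r := by linarith
        set C : ℝ := r / (1 - r) with hC
        have hC1 : C * (1/r - 1) = 1 := by
          rw [hC]; field_simp
        have hC2 : 1 ≤ C * (1/r + 1) := by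
          have h : C * (1/r + 1) = (1 + r)/(1 - r) := by
            rw [hC]; field_simp
          rw [h, le_div_iff₀ h1r]; linarith
        refine (hZint.norm.const_mul C).mono' hεm.aestronglyMeasurable ?_
        refine Filter.Eventually.of_forall fun ω => ?_
        rw [hZ ω]
        have h0 : (0:ℝ) ≤ ‖ε ω‖ := norm_nonneg _
        have h2 : (1:ℝ) < 1/r := by rw [lt_div_iff₀ hr0]; linarith
        cases h : ξ ω
        · simp only [if_neg, Bool.false_eq_true, if_false, Real.norm_eq_abs, abs_mul]
          rw [abs_neg, abs_of_pos (by linarith : (0:ℝ) < 1/r + 1)]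
          nlinarith [abs_nonneg (ε ω)]
        · simp only [if_pos, if_true, Real.norm_eq_abs, abs_mul]
          rw [abs_of_pos (by linarith : (0:ℝ) < 1/r - 1)]
          nlinarith [abs_nonneg (ε ω)]
      rw [condExp_of_not_integrable hZnint]
  · -- distribution part
    have map_restrict : ∀ (f : Ω → ℝ), Measurable f → IndepFun f ξ P → ∀ b : Bool,
        Measure.map f (P.restrict (ξ ⁻¹' {b})) = P (ξ ⁻¹' {b}) • Measure.map f P := by
      intro f hf hif b
      ext s hs
      rw [Measure.map_apply hf hs, Measure.restrict_apply (hf hs), Measure.smul_apply,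
        Measure.map_apply hf hs, smul_eq_mul,
        hif.measure_inter_preimage_eq_mul s {b} hs (measurableSet_singleton b), mul_comm]
    have hεr : Measurable (fun ω => ε ω / r) := hεm.div_const r
    have hεnr : Measurable (fun ω => -ε ω / r) := hεm.neg.div_const r
    have hsym' : Measure.map (fun ω => -ε ω / r) P = Measure.map (fun ω => ε ω / r) P := by
      have h1 : (fun ω => -ε ω / r) = (fun x => x / r) ∘ (fun ω => -ε ω) := rfl
      have h2 : (fun ω => ε ω / r) = (fun x => x / r) ∘ ε := rfl
      rw [h1, h2, ← Measure.map_map (f := fun ω => -ε ω) (measurable_div_const r) hεm.neg,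
        ← Measure.map_map (measurable_div_const r) hεm, hsym]
    have hfun : (fun ω => ε ω + Z ω) = fun ω => if ξ ω then ε ω / r else -ε ω / r := by
      funext ω
      rw [hZ ω]
      cases h : ξ ω <;> simp [h] <;> field_simp <;> ring
    have hA : MeasurableSet (ξ ⁻¹' {true}) := hξm (measurableSet_singleton true)
    have hAset : {ω | ξ ω = true} = ξ ⁻¹' {true} := by ext ω; simp
    have hhm : Measurable (fun ω => if ξ ω then ε ω / r else -ε ω / r) := by
      exact Measurable.ite (hAset ▸ hA) hεr hεnr
    have hindr : IndepFun (fun ω => ε ω / r) ξ P := by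
      have := hind.comp (measurable_div_const r) measurable_id
      exact this
    have hindnr : IndepFun (fun ω => -ε ω / r) ξ P := by
      have := hind.comp ((measurable_id.neg : Measurable fun x : ℝ => -x).div_const r)
        measurable_id
      exact this
    rw [hfun]
    have hABc : (ξ ⁻¹' {true})ᶜ = ξ ⁻¹' {false} := by ext ω; cases h : ξ ω <;> simp [h]
    calc Measure.map (fun ω => if ξ ω then ε ω / r else -ε ω / r) P
        = Measure.map (fun ω => if ξ ω then ε ω / r else -ε ω / r)
            (P.restrict (ξ ⁻¹' {true}) + P.restrict (ξ ⁻¹' {true})ᶜ) := by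
          rw [Measure.restrict_add_restrict_compl hA]
      _ = Measure.map (fun ω => ε ω / r) (P.restrict (ξ ⁻¹' {true}))
            + Measure.map (fun ω => -ε ω / r) (P.restrict (ξ ⁻¹' {false})) := by
          rw [Measure.map_add _ _ hhm, hABc]
          congr 1
          · refine Measure.map_congr (ae_restrict_of_forall_mem hA fun ω hω => ?_)
            simp only [Set.mem_preimage, Set.mem_singleton_iff] at hω
            simp [hω]
          · refine Measure.map_congr (ae_restrict_of_forall_mem (hABc ▸ hA.compl) fun ω hω => ?_)
            simp only [Set.mem_preimage, Set.mem_singleton_iff] at hω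
            simp [hω]
      _ = P (ξ ⁻¹' {true}) • Measure.map (fun ω => ε ω / r) P
            + P (ξ ⁻¹' {false}) • Measure.map (fun ω => ε ω / r) P := by
          rw [map_restrict _ hεr hindr true, map_restrict _ hεnr hindnr false, hsym']
      _ = Measure.map (fun ω => ε ω / r) P := by
          rw [← add_smul, ← hABc, measure_add_measure_compl hA, measure_univ, one_smul]
end

section
/- Let ε be a mean-zero random variable symmetric around zero with non-degenerate distribution, let r ∈ (0,1), and let h : ℝ → ℝ be strictly convex. Suppose B + ε/r and B + ε take values in the domain of h, where B is a constant. Then E[h(B + ε/r)] > E[h(B + ε)]. If instead h is strictly concave, the inequality reverses. -/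
open MeasureTheory

lemma aux11 {Ω : Type*} [MeasurableSpace Ω] (ℙ : Measure Ω) [IsProbabilityMeasure ℙ]
    (ε : Ω → ℝ) (hint : Integrable ε ℙ)
    (hsym : Measure.map (fun ω => -ε ω) ℙ = Measure.map ε ℙ)
    (hnd : ¬ (∀ᵐ ω ∂ℙ, ε ω = 0))
    (r : ℝ) (hr : r ∈ Set.Ioo (0:ℝ) 1) (B : ℝ) (h : ℝ → ℝ)
    (hi1 : Integrable (fun ω => h (B + ε ω / r)) ℙ)
    (hi2 : Integrable (fun ω => h (B + ε ω)) ℙ)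
    (hconv : StrictConvexOn ℝ Set.univ h) :
    (∫ ω, h (B + ε ω) ∂ℙ) < ∫ ω, h (B + ε ω / r) ∂ℙ := by
  obtain ⟨hr0, hr1⟩ := hr
  have hcont : Continuous h := by
    have := hconv.convexOn.continuousOn isOpen_univ
    exact continuousOn_univ.mp this
  have hεm : AEMeasurable ε ℙ := hint.aemeasurable
  have hg : StronglyMeasurable (fun x : ℝ => h (B + x / r)) :=
    (hcont.comp (by continuity)).stronglyMeasurable
  -- integrability and integral of h (B - ε/r)
  have hmap1 : Integrable (fun x : ℝ => h (B + x / r)) (Measure.map ε ℙ) := by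
    rw [integrable_map_measure hg.aestronglyMeasurable hεm]
    exact hi1
  have hmap2 : Integrable (fun x : ℝ => h (B + x / r)) (Measure.map (fun ω => -ε ω) ℙ) := by
    rwa [hsym]
  have hneg_int : Integrable (fun ω => h (B + (-ε ω) / r)) ℙ := by
    have := (integrable_map_measure hg.aestronglyMeasurable hεm.neg).mp hmap2
    exact this
  have hint_eq : ∫ ω, h (B + (-ε ω) / r) ∂ℙ = ∫ ω, h (B + ε ω / r) ∂ℙ := by
    have h1 : ∫ ω, h (B + (-ε ω) / r) ∂ℙ
        = ∫ x, h (B + x / r) ∂(Measure.map (fun ω => -ε ω) ℙ) :=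
      (integral_map hεm.neg hg.aestronglyMeasurable).symm
    have h2 : ∫ x, h (B + x / r) ∂(Measure.map ε ℙ) = ∫ ω, h (B + ε ω / r) ∂ℙ :=
      integral_map hεm hg.aestronglyMeasurable
    rw [h1, hsym, h2]
  set F : Ω → ℝ := fun ω =>
    ((1 + r) / 2) * h (B + ε ω / r) + ((1 - r) / 2) * h (B + (-ε ω) / r) - h (B + ε ω)
    with hF
  have hFnonneg : ∀ ω, 0 ≤ F ω := by
    intro ω
    by_cases hε : ε ω = 0
    · simp [hF, hε]; ring_nf; simp
    · have hxy : (B + ε ω / r) ≠ (B + (-ε ω) / r) := by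
        intro hc
        apply hε
        field_simp at hc
        linarith
      have := hconv.2 (Set.mem_univ (B + ε ω / r)) (Set.mem_univ (B + (-ε ω) / r)) hxy
        (show (0:ℝ) < (1 + r) / 2 by linarith) (show (0:ℝ) < (1 - r) / 2 by linarith)
        (show (1 + r) / 2 + (1 - r) / 2 = 1 by ring)
      have hcomb : ((1 + r) / 2) • (B + ε ω / r) + ((1 - r) / 2) • (B + (-ε ω) / r)
          = B + ε ω := by
        field_simp
        simp only [smul_eq_mul]
        field_simp
        ring
      rw [hcomb] at this
      simp only [smul_eq_mul] at this
      simp only [hF]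
      linarith
  have hFint : Integrable F ℙ :=
    ((hi1.const_mul _).add (hneg_int.const_mul _)).sub hi2
  have hFI : ∫ ω, F ω ∂ℙ =
      ((1 + r) / 2) * (∫ ω, h (B + ε ω / r) ∂ℙ)
      + ((1 - r) / 2) * (∫ ω, h (B + (-ε ω) / r) ∂ℙ)
      - ∫ ω, h (B + ε ω) ∂ℙ := by
    have e1 : ∫ ω, ((1 + r) / 2 * h (B + ε ω / r) + (1 - r) / 2 * h (B + (-ε ω) / r)) ∂ℙ
        = (∫ ω, (1 + r) / 2 * h (B + ε ω / r) ∂ℙ)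
          + ∫ ω, (1 - r) / 2 * h (B + (-ε ω) / r) ∂ℙ :=
      integral_add (hi1.const_mul _) (hneg_int.const_mul _)
    have e0 : ∫ ω, F ω ∂ℙ
        = (∫ ω, ((1 + r) / 2 * h (B + ε ω / r) + (1 - r) / 2 * h (B + (-ε ω) / r)) ∂ℙ)
          - ∫ ω, h (B + ε ω) ∂ℙ :=
      integral_sub ((hi1.const_mul _).add (hneg_int.const_mul _)) hi2
    rw [e0, e1, integral_const_mul, integral_const_mul]
  have hFpos : 0 < ∫ ω, F ω ∂ℙ := by
    rcases lt_or_eq_of_le (integral_nonneg (show (0 : Ω → ℝ) ≤ F from hFnonneg)) with hpos | heq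
    · exact hpos
    · exfalso
      have hae : F =ᵐ[ℙ] 0 := by
        rw [← integral_eq_zero_iff_of_nonneg hFnonneg hFint]
        exact heq.symm
      apply hnd
      filter_upwards [hae] with ω hω
      by_contra hε
      have hxy : (B + ε ω / r) ≠ (B + (-ε ω) / r) := by
        intro hc
        apply hε
        field_simp at hc
        linarith
      have := hconv.2 (Set.mem_univ (B + ε ω / r)) (Set.mem_univ (B + (-ε ω) / r)) hxy
        (show (0:ℝ) < (1 + r) / 2 by linarith) (show (0:ℝ) < (1 - r) / 2 by linarith)
        (show (1 + r) / 2 + (1 - r) / 2 = 1 by ring)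
      have hcomb : ((1 + r) / 2) • (B + ε ω / r) + ((1 - r) / 2) • (B + (-ε ω) / r)
          = B + ε ω := by
        field_simp
        simp only [smul_eq_mul]
        field_simp
        ring
      rw [hcomb] at this
      simp only [smul_eq_mul] at this
      simp only [hF, Pi.zero_apply] at hω
      linarith
  rw [hFI, hint_eq] at hFpos
  linarith

theorem stmt11 {Ω : Type*} [MeasurableSpace Ω] (ℙ : Measure Ω) [IsProbabilityMeasure ℙ]
    (ε : Ω → ℝ) (hint : Integrable ε ℙ) (hmean : ∫ ω, ε ω ∂ℙ = 0)
    (hsym : Measure.map (fun ω => -ε ω) ℙ = Measure.map ε ℙ)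
    (hnd : ¬ (∀ᵐ ω ∂ℙ, ε ω = 0))
    (r : ℝ) (hr : r ∈ Set.Ioo (0:ℝ) 1) (B : ℝ) (h : ℝ → ℝ)
    (hi1 : Integrable (fun ω => h (B + ε ω / r)) ℙ)
    (hi2 : Integrable (fun ω => h (B + ε ω)) ℙ) :
    (StrictConvexOn ℝ Set.univ h →
      (∫ ω, h (B + ε ω) ∂ℙ) < ∫ ω, h (B + ε ω / r) ∂ℙ) ∧
    (StrictConcaveOn ℝ Set.univ h →
      (∫ ω, h (B + ε ω / r) ∂ℙ) < ∫ ω, h (B + ε ω) ∂ℙ) := by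
  constructor
  · intro hc
    exact aux11 ℙ ε hint hsym hnd r hr B h hi1 hi2 hc
  · intro hc
    have := aux11 ℙ ε hint hsym hnd r hr B (fun x => -h x) hi1.neg hi2.neg hc.neg
    simp only [integral_neg] at this
    linarith
end

section
/- Let a, b > 0 with a > 1 (i.e., ln a > 0), and define y(x) = ln((a+b)^x - b^x) / ln(a) for x > 0. Then y is strictly concave, y(1) = 1, and for any Δ ∈ (0,1), the Lebesgue measure of the set {(x, t) ∈ [1-Δ, 1+Δ]² : t > y(x)} is strictly greater than the Lebesgue measure of {(x, t) ∈ [1-Δ, 1+Δ]² : t < y(x)}. -/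
open MeasureTheory

/-- Strict two-term weighted AM-GM. -/
lemma stmt18_amgm {x y p q : ℝ} (hx : 0 < x) (hy : 0 < y) (hxy : x ≠ y)
    (hp : 0 < p) (hq : 0 < q) (hpq : p + q = 1) :
    x ^ p * y ^ q < p * x + q * y := by
  have h := strictConcaveOn_log_Ioi.2 hx hy hxy hp hq hpq
  simp only [smul_eq_mul] at h
  have hsum : 0 < p * x + q * y := by positivity
  have h2 := Real.exp_lt_exp.mpr h
  rwa [Real.exp_log hsum, Real.exp_add, mul_comm p _, mul_comm q _,
    ← Real.rpow_def_of_pos hx, ← Real.rpow_def_of_pos hy] at h2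

/-- Strict superadditivity of weighted geometric means (Hölder). -/
lemma stmt18_holder {α β γ δ p q : ℝ} (hα : 0 < α) (hβ : 0 < β) (hγ : 0 < γ)
    (hδ : 0 < δ) (hne : α * δ ≠ β * γ) (hp : 0 < p) (hq : 0 < q) (hpq : p + q = 1) :
    α ^ p * β ^ q + γ ^ p * δ ^ q < (α + γ) ^ p * (β + δ) ^ q := by
  set A := α + γ with hA
  set B := β + δ with hB
  have hApos : 0 < A := by positivity
  have hBpos : 0 < B := by positivity
  have h1 : α / A ≠ β / B := by
    intro h
    rw [div_eq_div_iff hApos.ne' hBpos.ne'] at h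
    apply hne
    nlinarith [h]
  have h2 : γ / A ≠ δ / B := by
    intro h
    rw [div_eq_div_iff hApos.ne' hBpos.ne'] at h
    apply hne
    nlinarith [h]
  have k1 := stmt18_amgm (by positivity) (by positivity) h1 hp hq hpq
  have k2 := stmt18_amgm (by positivity) (by positivity) h2 hp hq hpq
  have key : (α / A) ^ p * (β / B) ^ q + (γ / A) ^ p * (δ / B) ^ q < 1 := by
    have e : p * (α / A) + q * (β / B) + (p * (γ / A) + q * (δ / B)) = 1 := by
      field_simp
      linear_combination (α * β + α * δ + β * γ + δ * γ) * hpq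
    linarith
  have e1 : (α / A) ^ p * (β / B) ^ q = α ^ p * β ^ q / (A ^ p * B ^ q) := by
    rw [Real.div_rpow hα.le hApos.le, Real.div_rpow hβ.le hBpos.le]
    ring
  have e2 : (γ / A) ^ p * (δ / B) ^ q = γ ^ p * δ ^ q / (A ^ p * B ^ q) := by
    rw [Real.div_rpow hγ.le hApos.le, Real.div_rpow hδ.le hBpos.le]
    ring
  have hD : 0 < A ^ p * B ^ q := by positivity
  rw [e1, e2, ← add_div, div_lt_one hD] at key
  exact key

/-- Strict concavity of `log ((a+b)^x - b^x)` on `(0, ∞)`. -/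
lemma stmt18_concave {a b : ℝ} (ha : 1 < a) (hb : 0 < b) :
    StrictConcaveOn ℝ (Set.Ioi (0:ℝ)) (fun x : ℝ => Real.log ((a + b) ^ x - b ^ x)) := by
  have hab : (0:ℝ) < a + b := by linarith
  have hblt : b < a + b := by linarith
  have hgpos : ∀ x : ℝ, 0 < x → 0 < (a + b) ^ x - b ^ x := by
    intro x hx
    have := Real.rpow_lt_rpow hb.le hblt hx
    linarith
  refine ⟨convex_Ioi 0, ?_⟩
  intro x hx z hz hxz p q hp hq hpq
  simp only [smul_eq_mul]
  have hgx := hgpos x hx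
  have hgz := hgpos z hz
  have hmem : 0 < p * x + q * z := by
    have : 0 < p * x := mul_pos hp hx
    have : 0 < q * z := mul_pos hq hz
    positivity
  rw [← Real.log_rpow hgx, ← Real.log_rpow hgz,
    ← Real.log_mul (by positivity) (by positivity)]
  apply Real.log_lt_log (by positivity)
  have e1 : (a + b) ^ (p * x + q * z) = ((a + b) ^ x) ^ p * ((a + b) ^ z) ^ q := by
    rw [Real.rpow_add hab, mul_comm p x, mul_comm q z,
      Real.rpow_mul hab.le, Real.rpow_mul hab.le]
  have e2 : b ^ (p * x + q * z) = (b ^ x) ^ p * (b ^ z) ^ q := by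
    rw [Real.rpow_add hb, mul_comm p x, mul_comm q z,
      Real.rpow_mul hb.le, Real.rpow_mul hb.le]
  rw [e1, e2]
  set U := (a + b) ^ x with hU
  set V := (a + b) ^ z with hV
  set P := b ^ x with hP
  set Q := b ^ z with hQ
  have hPpos : 0 < P := Real.rpow_pos_of_pos hb x
  have hQpos : 0 < Q := Real.rpow_pos_of_pos hb z
  have hUP : 0 < U - P := hgx
  have hVQ : 0 < V - Q := hgz
  have hc : 1 < (a + b) / b := (one_lt_div hb).mpr hblt
  have hne : (U - P) * Q ≠ (V - Q) * P := by
    intro h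
    have hUQVP : U * Q = V * P := by nlinarith [h]
    have : ((a + b) / b) ^ x = ((a + b) / b) ^ z := by
      rw [Real.div_rpow hab.le hb.le, Real.div_rpow hab.le hb.le]
      rw [div_eq_div_iff hPpos.ne' hQpos.ne']
      exact hUQVP
    rcases lt_trichotomy x z with h' | h' | h'
    · exact absurd this (ne_of_lt ((Real.rpow_lt_rpow_left_iff hc).mpr h'))
    · exact hxz h'
    · exact absurd this.symm (ne_of_lt ((Real.rpow_lt_rpow_left_iff hc).mpr h'))
  have key := stmt18_holder hUP hVQ hPpos hQpos hne hp hq hpq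
  have eU : U - P + P = U := by ring
  have eV : V - Q + Q = V := by ring
  rw [eU, eV] at key
  linarith

theorem stmt18 (a b : ℝ) (ha : 1 < a) (hb : 0 < b)
    (y : ℝ → ℝ)
    (hy : ∀ x, y x = Real.log ((a + b) ^ x - b ^ x) / Real.log a) :
    StrictConcaveOn ℝ (Set.Ioi 0) y ∧ y 1 = 1 ∧
    ∀ Δ ∈ Set.Ioo (0:ℝ) 1,
      volume {p : ℝ × ℝ | p ∈ Set.Icc (1 - Δ) (1 + Δ) ×ˢ Set.Icc (1 - Δ) (1 + Δ)
                ∧ p.2 < y p.1}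
        < volume {p : ℝ × ℝ | p ∈ Set.Icc (1 - Δ) (1 + Δ) ×ˢ Set.Icc (1 - Δ) (1 + Δ)
                ∧ y p.1 < p.2} := by
  have hla : 0 < Real.log a := Real.log_pos ha
  have hab : (0:ℝ) < a + b := by linarith
  have hapos : (0:ℝ) < a := by linarith
  have hgpos : ∀ x : ℝ, 0 < x → 0 < (a + b) ^ x - b ^ x := by
    intro x hx
    have := Real.rpow_lt_rpow hb.le (by linarith : b < a + b) hx
    linarith
  -- Part 1: strict concavity
  have hf := stmt18_concave ha hb
  have hcon : StrictConcaveOn ℝ (Set.Ioi 0) y := by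
    refine ⟨convex_Ioi 0, ?_⟩
    intro u hu v hv huv p q hp hq hpq
    have h := hf.2 hu hv huv hp hq hpq
    simp only [smul_eq_mul] at h ⊢
    rw [hy u, hy v, hy (p * u + q * v)]
    have e : p * (Real.log ((a+b)^u - b^u) / Real.log a)
        + q * (Real.log ((a+b)^v - b^v) / Real.log a)
        = (p * Real.log ((a+b)^u - b^u) + q * Real.log ((a+b)^v - b^v)) / Real.log a := by
      ring
    rw [e]
    gcongr
  -- Part 2: value at 1
  have hy1 : y 1 = 1 := by
    rw [hy 1, Real.rpow_one, Real.rpow_one, add_sub_cancel_right, div_self hla.ne']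
  refine ⟨hcon, hy1, ?_⟩
  -- Part 3: the measure comparison
  intro Δ hΔ
  obtain ⟨hΔ0, hΔ1⟩ := hΔ
  set S : Set ℝ := Set.Icc (1 - Δ) (1 + Δ) with hS
  -- measurability of y
  have hyfun : y = fun x => Real.log (Real.exp (x * Real.log (a + b))
      - Real.exp (x * Real.log b)) / Real.log a := by
    funext x
    rw [hy x, Real.rpow_def_of_pos hab, Real.rpow_def_of_pos hb, mul_comm (Real.log (a+b)),
      mul_comm (Real.log b)]
  have hmy : Measurable y := by
    rw [hyfun]
    exact (Real.measurable_log.comp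
      ((Real.measurable_exp.comp (measurable_id.mul_const _)).sub
        (Real.measurable_exp.comp (measurable_id.mul_const _)))).div_const _
  -- continuity of y at positive points
  have hycont : ∀ x : ℝ, 0 < x → ContinuousAt y x := by
    intro x hx
    rw [hyfun]
    have hg : ContinuousAt (fun x => Real.exp (x * Real.log (a + b))
        - Real.exp (x * Real.log b)) x := by fun_prop
    have hgx : Real.exp (x * Real.log (a + b)) - Real.exp (x * Real.log b) ≠ 0 := by
      have := hgpos x hx
      rw [Real.rpow_def_of_pos hab, Real.rpow_def_of_pos hb, mul_comm (Real.log (a+b)),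
        mul_comm (Real.log b)] at this
      exact this.ne'
    exact (hg.log hgx).div_const _
  -- concavity consequences
  have hsum_lt : ∀ x : ℝ, 0 < x → x < 2 → x ≠ 1 → y x + y (2 - x) < 2 := by
    intro x hx hx2 hne
    have h := hcon.2 (Set.mem_Ioi.mpr hx) (Set.mem_Ioi.mpr (by linarith : (0:ℝ) < 2 - x))
      (by intro h; apply hne; linarith) (by norm_num : (0:ℝ) < 1/2)
      (by norm_num : (0:ℝ) < 1/2) (by norm_num)
    simp only [smul_eq_mul] at h
    have e : (1/2 : ℝ) * x + (1/2 : ℝ) * (2 - x) = 1 := by ring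
    rw [e, hy1] at h
    linarith
  have hsum_le : ∀ x : ℝ, 0 < x → x < 2 → y x + y (2 - x) ≤ 2 := by
    intro x hx hx2
    rcases eq_or_ne x 1 with rfl | hne
    · norm_num [hy1]
    · exact (hsum_lt x hx hx2 hne).le
  -- choose δ from continuity of y at 1
  obtain ⟨δ₁, hδ₁pos, hδ₁⟩ := Metric.continuousAt_iff.mp (hycont 1 one_pos) (Δ/2) (by linarith)
  obtain ⟨δ, hδpos, hδle, hδlt⟩ : ∃ δ : ℝ, 0 < δ ∧ δ ≤ Δ / 2 ∧ δ < δ₁ :=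
    ⟨min (δ₁ / 2) (Δ / 2), lt_min (by linarith) (by linarith), min_le_right _ _,
      lt_of_le_of_lt (min_le_left _ _) (by linarith)⟩
  have hynear : ∀ x : ℝ, |x - 1| ≤ δ → |y x - 1| < Δ / 2 := by
    intro x hx
    have : dist x 1 < δ₁ := by
      rw [Real.dist_eq]
      linarith
    have h := hδ₁ this
    rwa [Real.dist_eq, hy1] at h
  -- the midpoint and the gap
  set x₀ : ℝ := 1 + δ / 2 with hx₀
  clear_value x₀
  have hx₀pos : 0 < x₀ := by rw [hx₀]; linarith
  have h2x₀pos : 0 < 2 - x₀ := by rw [hx₀]; linarith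
  obtain ⟨c, hc, hcpos⟩ : ∃ c : ℝ, c = 2 - y (2 - x₀) - y x₀ ∧ 0 < c := by
    refine ⟨_, rfl, ?_⟩
    have := hsum_lt x₀ hx₀pos (by rw [hx₀]; linarith) (by rw [hx₀]; intro h; linarith)
    linarith
  obtain ⟨η₁, hη₁pos, hη₁⟩ := Metric.continuousAt_iff.mp (hycont x₀ hx₀pos) (c/3) (by linarith)
  obtain ⟨η₂, hη₂pos, hη₂⟩ :=
    Metric.continuousAt_iff.mp (hycont (2 - x₀) h2x₀pos) (c/3) (by linarith)
  obtain ⟨η, hηpos, hηδ, hηη₁, hηη₂⟩ :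
      ∃ η : ℝ, 0 < η ∧ η ≤ δ / 4 ∧ η ≤ η₁ ∧ η ≤ η₂ :=
    ⟨min (min η₁ η₂) (δ / 4), lt_min (lt_min hη₁pos hη₂pos) (by linarith),
      min_le_right _ _, le_trans (min_le_left _ _) (min_le_left _ _),
      le_trans (min_le_left _ _) (min_le_right _ _)⟩
  set B' : Set (ℝ × ℝ) := {p : ℝ × ℝ | p ∈ S ×ˢ S ∧ 2 - y (2 - p.1) < p.2} with hB'
  set R : Set (ℝ × ℝ) :=
    Set.Ioo (x₀ - η) (x₀ + η) ×ˢ Set.Ioo (y x₀ + c/3) (2 - y (2 - x₀) - c/3) with hR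
  -- properties of points in R
  have hRprop : ∀ p : ℝ × ℝ, p ∈ R →
      p ∈ S ×ˢ S ∧ y p.1 < p.2 ∧ p.2 < 2 - y (2 - p.1) := by
    rintro ⟨u, t⟩ hp
    rw [hR] at hp
    obtain ⟨⟨hu1, hu2⟩, ht1, ht2⟩ := hp
    simp only at hu1 hu2 ht1 ht2 ⊢
    have hu1' : 1 < u := by rw [hx₀] at hu1; linarith
    have hu2' : u < 1 + δ := by rw [hx₀] at hu2; linarith
    have hyu : |y u - 1| < Δ / 2 := hynear u (by rw [abs_of_nonneg (by linarith)]; linarith)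
    have hy2u : |y (2 - u) - 1| < Δ / 2 := hynear (2 - u)
      (by rw [abs_of_nonpos (by linarith)]; linarith)
    have hyu' : |y u - y x₀| < c / 3 := by
      have hd : dist u x₀ < η₁ := by
        rw [Real.dist_eq, abs_lt]
        constructor <;> linarith
      have := hη₁ hd
      rwa [Real.dist_eq] at this
    have hzu' : |y (2 - u) - y (2 - x₀)| < c / 3 := by
      have hd : dist (2 - u) (2 - x₀) < η₂ := by
        rw [Real.dist_eq, abs_lt]
        constructor <;> linarith
      have := hη₂ hd
      rwa [Real.dist_eq] at this
    rw [abs_lt] at hyu hy2u hyu' hzu'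
    rw [hS]
    refine ⟨⟨Set.mem_Icc.mpr ⟨?_, ?_⟩, Set.mem_Icc.mpr ⟨?_, ?_⟩⟩, ?_, ?_⟩
    · linarith
    · linarith
    · linarith
    · linarith
    · linarith
    · linarith
  -- the reflection map
  set e : ℝ × ℝ → ℝ × ℝ := Prod.map (fun x : ℝ => 2 - x) (fun x : ℝ => 2 - x) with he
  have hmp : MeasurePreserving e volume volume := by
    have h1 : MeasurePreserving (fun x : ℝ => 2 - x) volume volume :=
      Measure.measurePreserving_sub_left volume 2
    rw [he, show (volume : Measure (ℝ × ℝ)) = (volume : Measure ℝ).prod volume from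
      MeasureTheory.Measure.volume_eq_prod ℝ ℝ]
    exact h1.prod h1
  have hpre : e ⁻¹' B' = {p : ℝ × ℝ | p ∈ S ×ˢ S ∧ p.2 < y p.1} := by
    ext ⟨u, t⟩
    simp only [he, hB', hS, Set.mem_preimage, Prod.map_apply, Set.mem_setOf_eq, Set.mem_prod,
      Set.mem_Icc]
    have har : (2 : ℝ) - (2 - u) = u := by ring
    rw [har]
    constructor
    · rintro ⟨⟨⟨h1, h2⟩, h3, h4⟩, h5⟩
      exact ⟨⟨⟨by linarith, by linarith⟩, by linarith, by linarith⟩, by linarith⟩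
    · rintro ⟨⟨⟨h1, h2⟩, h3, h4⟩, h5⟩
      exact ⟨⟨⟨by linarith, by linarith⟩, by linarith, by linarith⟩, by linarith⟩
  -- measurability
  have hmz : Measurable fun x : ℝ => 2 - y (2 - x) :=
    measurable_const.sub (hmy.comp (measurable_const.sub measurable_id))
  have hB'meas : MeasurableSet B' := by
    rw [hB', hS]
    exact (measurableSet_Icc.prod measurableSet_Icc).inter
      (measurableSet_lt (hmz.comp measurable_fst) measurable_snd)
  have hRmeas : MeasurableSet R := by
    rw [hR]
    exact measurableSet_Ioo.prod measurableSet_Ioo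
  -- volume identities
  have hvolB : volume {p : ℝ × ℝ | p ∈ S ×ˢ S ∧ p.2 < y p.1} = volume B' := by
    rw [← hpre]
    exact hmp.measure_preimage hB'meas.nullMeasurableSet
  have hfin : volume B' ≠ ⊤ := by
    have hsub : B' ⊆ S ×ˢ S := by
      rw [hB']
      exact fun p hp => hp.1
    have hlt : volume (S ×ˢ S) < ⊤ := by
      rw [hS, MeasureTheory.Measure.volume_eq_prod ℝ ℝ, Measure.prod_prod, Real.volume_Icc]
      exact ENNReal.mul_lt_top ENNReal.ofReal_lt_top ENNReal.ofReal_lt_top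
    exact ((measure_mono hsub).trans_lt hlt).ne
  have hRpos : 0 < volume R := by
    rw [hR, MeasureTheory.Measure.volume_eq_prod ℝ ℝ, Measure.prod_prod, Real.volume_Ioo, Real.volume_Ioo]
    apply ENNReal.mul_pos
    · simp only [ne_eq, ENNReal.ofReal_eq_zero, not_le]
      linarith
    · simp only [ne_eq, ENNReal.ofReal_eq_zero, not_le]
      linarith
  -- inclusion in the upper set and disjointness
  have hB'A : B' ⊆ {p : ℝ × ℝ | p ∈ S ×ˢ S ∧ y p.1 < p.2} := by
    rintro ⟨u, t⟩ hp
    rw [hB'] at hp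
    obtain ⟨hmem, hlt⟩ := hp
    refine ⟨hmem, ?_⟩
    have hu : u ∈ S := hmem.1
    rw [hS, Set.mem_Icc] at hu
    obtain ⟨hu1, hu2⟩ := hu
    have h := hsum_le u (by linarith) (by linarith)
    simp only at hlt ⊢
    linarith
  have hRA : R ⊆ {p : ℝ × ℝ | p ∈ S ×ˢ S ∧ y p.1 < p.2} := by
    intro p hp
    obtain ⟨h1, h2, _⟩ := hRprop p hp
    exact ⟨h1, h2⟩
  have hdisj : Disjoint B' R := by
    rw [Set.disjoint_left]
    rintro p hpB hpR
    obtain ⟨_, _, hlt'⟩ := hRprop p hpR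
    rw [hB'] at hpB
    exact absurd (hpB.2.trans hlt') (lt_irrefl _)
  calc volume {p : ℝ × ℝ | p ∈ S ×ˢ S ∧ p.2 < y p.1}
      = volume B' := hvolB
    _ < volume B' + volume R := ENNReal.lt_add_right hfin hRpos.ne'
    _ = volume (B' ∪ R) := (measure_union hdisj hRmeas).symm
    _ ≤ volume {p : ℝ × ℝ | p ∈ S ×ˢ S ∧ y p.1 < p.2} :=
        measure_mono (Set.union_subset hB'A hRA)
end

section
/- Let u : ℝ₊ → ℝ₊ with u(0) = 0 and let F : ℝ₊² → [0,1] satisfy: F is strictly increasing in its first argument whenever F ∈ (0,1), F(a,b) = 1 - F(b,a), and for all valid x, y, p, q, r ∈ (0,1]: F(p·u(x), p·q·u(y)) = F(r·p·u(x), r·p·q·u(y)) (Weak Linearity, assuming the range of p·u over the relevant domain is a connected interval containing some δ > 0 up to u* = max u). Then there exists a function G such that F(a, b) = G(ln(a) - ln(b)) for all a, b ∈ (0, u*]. -/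
theorem stmt19 (u : ℝ → ℝ) (hu0 : u 0 = 0) (hupos : ∀ x, 0 ≤ u x)
    (ustar : ℝ) (hustar : 0 < ustar)
    (hrange : ∀ t ∈ Set.Ioc (0:ℝ) ustar,
      ∃ x : ℝ, 0 ≤ x ∧ ∃ p ∈ Set.Ioc (0:ℝ) 1, p * u x = t)
    (F : ℝ → ℝ → ℝ)
    (hF01 : ∀ a b, F a b ∈ Set.Icc (0:ℝ) 1)
    (hsym : ∀ a b, F a b = 1 - F b a)
    (hmono : ∀ b, StrictMonoOn (fun a => F a b) {a | F a b ∈ Set.Ioo (0:ℝ) 1})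
    (hWL : ∀ x ≥ (0:ℝ), ∀ y ≥ (0:ℝ), ∀ p ∈ Set.Ioc (0:ℝ) 1, ∀ q ∈ Set.Ioc (0:ℝ) 1,
      ∀ r ∈ Set.Ioc (0:ℝ) 1,
      F (p * u x) (p * q * u y) = F (r * (p * u x)) (r * (p * q * u y))) :
    ∃ G : ℝ → ℝ, ∀ a ∈ Set.Ioc (0:ℝ) ustar, ∀ b ∈ Set.Ioc (0:ℝ) ustar,
      F a b = G (Real.log a - Real.log b) := by
  -- Step 1: scale invariance on (0, ustar]
  have scale : ∀ a ∈ Set.Ioc (0:ℝ) ustar, ∀ b ∈ Set.Ioc (0:ℝ) ustar,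
      ∀ r ∈ Set.Ioc (0:ℝ) 1, F a b = F (r * a) (r * b) := by
    intro a ha b hb r hr
    obtain ⟨x, hx, p, hp, hpx⟩ := hrange a ha
    obtain ⟨y, hy, p', hp', hpy⟩ := hrange b hb
    rcases le_total p' p with h | h
    · have hq : p' / p ∈ Set.Ioc (0:ℝ) 1 :=
        ⟨div_pos hp'.1 hp.1, div_le_one_of_le₀ h hp.1.le⟩
      have key := hWL x hx y hy p hp (p'/p) hq r hr
      have h2 : p * (p' / p) * u y = b := by
        rw [mul_comm p (p'/p), div_mul_cancel₀ p' (ne_of_gt hp.1)]; exact hpy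
      rw [hpx, h2] at key
      exact key
    · have hq : p / p' ∈ Set.Ioc (0:ℝ) 1 :=
        ⟨div_pos hp.1 hp'.1, div_le_one_of_le₀ h hp'.1.le⟩
      have key := hWL y hy x hx p' hp' (p/p') hq r hr
      have h2 : p' * (p / p') * u x = a := by
        rw [mul_comm p' (p/p'), div_mul_cancel₀ p (ne_of_gt hp'.1)]; exact hpx
      rw [hpy, h2] at key
      have e1 := hsym a b
      have e2 := hsym (r*a) (r*b)
      rw [key] at e1
      linarith
  -- Step 2: F depends only on the ratio
  have ratio : ∀ a ∈ Set.Ioc (0:ℝ) ustar, ∀ b ∈ Set.Ioc (0:ℝ) ustar,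
      ∀ a' ∈ Set.Ioc (0:ℝ) ustar, ∀ b' ∈ Set.Ioc (0:ℝ) ustar,
      a * b' = a' * b → F a b = F a' b' := by
    intro a ha b hb a' ha' b' hb' hcross
    rcases le_total a' a with h | h
    · have hr : a' / a ∈ Set.Ioc (0:ℝ) 1 :=
        ⟨div_pos ha'.1 ha.1, div_le_one_of_le₀ h ha.1.le⟩
      have := scale a ha b hb (a'/a) hr
      have e1 : a' / a * a = a' := div_mul_cancel₀ a' (ne_of_gt ha.1)
      have e2 : a' / a * b = b' := by
        rw [div_mul_eq_mul_div, ← hcross, mul_comm a b', mul_div_assoc,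
          div_self (ne_of_gt ha.1), mul_one]
      rwa [e1, e2] at this
    · have hr : a / a' ∈ Set.Ioc (0:ℝ) 1 :=
        ⟨div_pos ha.1 ha'.1, div_le_one_of_le₀ h ha'.1.le⟩
      have := scale a' ha' b' hb' (a/a') hr
      have e1 : a / a' * a' = a := div_mul_cancel₀ a (ne_of_gt ha'.1)
      have e2 : a / a' * b' = b := by
        rw [div_mul_eq_mul_div, hcross, mul_comm a' b, mul_div_assoc,
          div_self (ne_of_gt ha'.1), mul_one]
      rw [e1, e2] at this
      exact this.symm
  -- Step 3: construct G
  refine ⟨fun t => F (ustar * min 1 (Real.exp t)) (ustar * min 1 (Real.exp (-t))), ?_⟩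
  intro a ha b hb
  set t := Real.log a - Real.log b with ht
  have hexp : Real.exp t = a / b := by
    rw [ht, Real.exp_sub, Real.exp_log ha.1, Real.exp_log hb.1]
  have hexpn : Real.exp (-t) = b / a := by
    rw [Real.exp_neg, hexp, inv_div]
  rcases le_total b a with h | h
  · have hm1 : min 1 (Real.exp t) = 1 := by
      rw [min_eq_left]
      rw [hexp]
      rw [le_div_iff₀ hb.1]
      linarith
    have hm2 : min 1 (Real.exp (-t)) = b / a := by
      rw [hexpn, min_eq_right]
      rw [div_le_one ha.1]
      exact h
    simp only [hm1, hm2, mul_one]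
    refine ratio a ha b hb ustar ⟨hustar, le_refl _⟩ (ustar * (b/a))
      ⟨mul_pos hustar (div_pos hb.1 ha.1), ?_⟩ ?_
    · calc ustar * (b/a) ≤ ustar * 1 := by
            apply mul_le_mul_of_nonneg_left _ hustar.le
            rw [div_le_one ha.1]; exact h
        _ = ustar := mul_one _
    · field_simp [ne_of_gt ha.1]
  · have hm1 : min 1 (Real.exp t) = a / b := by
      rw [hexp, min_eq_right]
      rw [div_le_one hb.1]
      exact h
    have hm2 : min 1 (Real.exp (-t)) = 1 := by
      rw [min_eq_left]
      rw [hexpn]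
      rw [le_div_iff₀ ha.1]
      linarith
    simp only [hm1, hm2, mul_one]
    refine ratio a ha b hb (ustar * (a/b)) ⟨mul_pos hustar (div_pos ha.1 hb.1), ?_⟩ ustar
      ⟨hustar, le_refl _⟩ ?_
    · calc ustar * (a/b) ≤ ustar * 1 := by
            apply mul_le_mul_of_nonneg_left _ hustar.le
            rw [div_le_one hb.1]; exact h
        _ = ustar := mul_one _
    · field_simp [ne_of_gt hb.1]
end
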